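/- arXiv:2002.04912 — 2 statements merged into one kernel-verified Lean document; each statement's English description precedes it below -/
import Mathlib

section
/- Let p be a prime, let n, k, l be positive integers with l | k, set d = gcd(n,k), L = lcm(d,l), and suppose p divides k/L. Let a ∈ 𝔽_{p^n}. Then the equation T_l^k(X) = a has a solution in 𝔽_{p^n} if and only if T_d^n(a) = 0. Moreover, in that case, for any δ ∈ 𝔽_{p^n} with T_d^n(δ) = 1, the element x₀ = S_l^{2l}( Σ_{i=0}^{n/d−2} Σ_{j=i+1}^{n/d−1} δ^{p^{kj}} a^{p^{ki}} ) lies in 𝔽_{p^n} and satisfies T_l^k(x₀) = a. -/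
open Finset

/-- `Tmap p u v x = Σ_{i=0}^{v/u - 1} x^{p^{u i}}` on the algebraic closure of `𝔽_p`. -/
noncomputable def Tmap (p : ℕ) [Fact p.Prime] (u v : ℕ) (x : AlgebraicClosure (ZMod p)) :
    AlgebraicClosure (ZMod p) :=
  ∑ i ∈ Finset.range (v / u), x ^ p ^ (u * i)

/-- `Smap p u v x = Σ_{i=0}^{v/u - 1} (-1)^i x^{p^{u i}}` on the algebraic closure of `𝔽_p`. -/
noncomputable def Smap (p : ℕ) [Fact p.Prime] (u v : ℕ) (x : AlgebraicClosure (ZMod p)) :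
    AlgebraicClosure (ZMod p) :=
  ∑ i ∈ Finset.range (v / u), (-1 : AlgebraicClosure (ZMod p)) ^ i * x ^ p ^ (u * i)

/-- `Ffield p m` is the subfield `𝔽_{p^m} = {x : x^{p^m} = x}` of the algebraic closure of `𝔽_p`. -/
def Ffield (p : ℕ) [Fact p.Prime] (m : ℕ) : Set (AlgebraicClosure (ZMod p)) :=
  {x | x ^ p ^ m = x}

/-!
Write `σ x = x ^ p ^ k` and `e = n / d`. On `𝔽_{p^n}` the powers of `σ` are those of
`x ↦ x ^ p ^ d` (`k / d` is a unit mod `e`), so `T_d^n = ∑_{i<e} σ^i` there.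
Since the maps `T` commute, `T_d^n (T_l^k x) = T_l^k (T_d^n x)`, and `T_l^k` kills `𝔽_{p^d}`:
on it the terms of `T_l^k` repeat with period `L / l`, so `T_l^k` is `k / L` times a shorter sum,
and `p ∣ k / L`.
Conversely `c = ∑_{i<j<e} σ^j δ · σ^i a` satisfies `σ c = c - a` (an explicit additive
Hilbert 90), and `S_l^{2l} c = c - c ^ p ^ l` telescopes under `T_l^k` to `c - σ c = a`.
A `δ` with `T_d^n δ = 1` exists because `∑_{i<e} X ^ p ^ (d i)` is nonzero of degree below
`p ^ n`, so it cannot vanish on all of `𝔽_{p^n}`.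
-/

open Function Polynomial

namespace Function.Periodic

variable {M : Type*} {f : ℕ → M}

theorem comp_mul_left {a t : ℕ} (hf : Periodic f (a * t)) : Periodic (fun i => f (a * i)) t :=
  fun i => by simp only [mul_add, hf (a * i)]

variable [AddCommMonoid M]

theorem sum_range_comp_add_one {e : ℕ} (hf : Periodic f e) :
    ∑ i ∈ range e, f (i + 1) = ∑ i ∈ range e, f i := by
  cases e with
  | zero => rfl
  | succ e => rw [sum_range_succ, sum_range_succ' f, hf.eq]

theorem sum_range_mul {t : ℕ} (hf : Periodic f t) (m : ℕ) :
    ∑ j ∈ range (m * t), f j = m • ∑ j ∈ range t, f j := by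
  induction m with
  | zero => simp
  | succ m ih =>
    rw [Nat.succ_mul, sum_range_add, ih, succ_nsmul]
    exact congrArg _ (sum_congr rfl fun j _ => by rw [add_comm, ← smul_eq_mul, hf.nsmul m j])

theorem sum_range_comp_mul {e c : ℕ} (hf : Periodic f e) (hc : c.Coprime e) :
    ∑ i ∈ range e, f (c * i) = ∑ i ∈ range e, f i := by
  have hmaps : ∀ i ∈ range e, c * i % e ∈ range e := fun i hi =>
    mem_range.2 (Nat.mod_lt _ (Nat.zero_lt_of_lt (mem_range.1 hi)))
  have hinj : Set.InjOn (fun i => c * i % e) (range e) := fun i hi j hj hij =>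
    (Nat.ModEq.cancel_left_of_coprime hc.symm hij).eq_of_lt_of_lt (mem_range.1 hi) (mem_range.1 hj)
  calc ∑ i ∈ range e, f (c * i) = ∑ i ∈ range e, f (c * i % e) :=
        sum_congr rfl fun i _ => (hf.map_mod_nat _).symm
    _ = ∑ i ∈ range e, f i :=
        sum_nbij _ hmaps hinj (surjOn_of_injOn_of_card_le _ (fun i hi => hmaps i hi) hinj le_rfl)
          fun _ _ => rfl

theorem sum_range_div_gcd_comp_mul {n : ℕ} (hf : Periodic f n) (k : ℕ) :
    ∑ i ∈ range (n / n.gcd k), f (k * i) = ∑ i ∈ range (n / n.gcd k), f (n.gcd k * i) := by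
  rcases (n.gcd k).eq_zero_or_pos with h0 | hpos
  · simp [h0]
  rw [← Nat.mul_div_cancel' (Nat.gcd_dvd_left n k)] at hf
  refine (sum_congr rfl fun i _ => ?_).trans
    (hf.comp_mul_left.sum_range_comp_mul (Nat.coprime_div_gcd_div_gcd hpos).symm)
  rw [← mul_assoc, Nat.mul_div_cancel' (Nat.gcd_dvd_right n k)]

end Function.Periodic

section

variable {R : Type*} [Monoid R] {x : R} {p n : ℕ}

theorem periodic_pow_pow (hx : x ^ p ^ n = x) : Periodic (fun m => x ^ p ^ m) n :=
  fun m => show x ^ p ^ (m + n) = x ^ p ^ m by rw [pow_add, pow_mul', hx]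

theorem pow_pow_eq_self_of_dvd (hx : x ^ p ^ n = x) {m : ℕ} (h : n ∣ m) : x ^ p ^ m = x := by
  obtain ⟨t, rfl⟩ := h
  have := (periodic_pow_pow hx).nat_mul_eq t
  rwa [mul_comm, pow_zero, pow_one] at this

end

section Hilbert90

variable {R : Type*} [CommRing R]

def hilbert90Sum (D A : ℕ → R) (e : ℕ) : R :=
  ∑ i ∈ range (e - 1), ∑ j ∈ Ico (i + 1) e, D j * A i

theorem map_hilbert90Sum (σ : R →+* R) {D A : ℕ → R} {e : ℕ}
    (hD : ∀ j, σ (D j) = D (j + 1)) (hA : ∀ i, σ (A i) = A (i + 1)) (hDe : D e = D 0)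
    (hDsum : ∑ j ∈ range e, D j = 1) (hAsum : ∑ i ∈ range e, A i = 0) :
    σ (hilbert90Sum D A e) = hilbert90Sum D A e - A 0 := by
  obtain _ | e := e
  · have := subsingleton_of_zero_eq_one (by simpa using hDsum)
    exact Subsingleton.elim _ _
  set T : ℕ → R := fun i => ∑ j ∈ Ico (i + 1) (e + 1), D j
  have hc : hilbert90Sum D A (e + 1) = ∑ i ∈ range e, T i * A i := by
    simp only [hilbert90Sum, Nat.add_sub_cancel, T, sum_mul]
  have hσT : ∀ i ∈ range e, σ (T i) = T (i + 1) + D 0 := fun i hi => by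
    simp only [T, map_sum, hD, sum_Ico_add' D, ← hDe]
    exact sum_Ico_succ_top (by have := mem_range.1 hi; omega) D
  have hT0 : T 0 = 1 - D 0 := by
    rw [← hDsum, range_eq_Ico, sum_eq_sum_Ico_succ_bot (Nat.succ_pos e)]
    ring
  have hTe : T e = 0 := by simp [T]
  have hTA := (sum_range_succ' (fun i => T i * A i) e).symm.trans (sum_range_succ _ e)
  have hA' := sum_range_succ' A e
  calc σ (hilbert90Sum D A (e + 1))
      = ∑ i ∈ range e, T (i + 1) * A (i + 1) + D 0 * ∑ i ∈ range e, A (i + 1) := by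
        rw [hc, map_sum, mul_sum, ← sum_add_distrib]
        exact sum_congr rfl fun i hi => by rw [map_mul, hσT i hi, hA, add_mul]
    _ = hilbert90Sum D A (e + 1) - A 0 := by
        rw [hc]
        linear_combination hTA - A 0 * hT0 + A e * hTe + D 0 * (hA'.symm.trans hAsum)

end Hilbert90

section Ffield

variable {p : ℕ} [Fact p.Prime]

local notation "K" => AlgebraicClosure (ZMod p)

variable (p) in
noncomputable def ffieldSubfield (n : ℕ) : Subfield K :=
  (iterateFrobenius K p n).eqLocusField (RingHom.id K)

theorem mem_ffieldSubfield {n : ℕ} {x : K} : x ∈ ffieldSubfield p n ↔ x ∈ Ffield p n := Iff.rfl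

theorem Tmap_comm (u v u' v' : ℕ) (x : K) :
    Tmap p u v (Tmap p u' v' x) = Tmap p u' v' (Tmap p u v x) := by
  simp only [Tmap, sum_pow_char_pow]
  exact sum_comm.trans (sum_congr rfl fun _ _ => sum_congr rfl fun _ _ => pow_right_comm ..)

theorem Tmap_mem_Ffield {d n : ℕ} {x : K} (hx : x ∈ Ffield p n) (hdn : d ∣ n) :
    Tmap p d n x ∈ Ffield p d := by
  have hF : Periodic (fun m => x ^ p ^ m) (d * (n / d)) := by
    rw [Nat.mul_div_cancel' hdn]; exact periodic_pow_pow hx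
  show (∑ i ∈ range (n / d), x ^ p ^ (d * i)) ^ p ^ d = _
  simp only [sum_pow_char_pow, ← pow_mul, ← pow_add, ← mul_add_one]
  exact hF.comp_mul_left.sum_range_comp_add_one

theorem Tmap_mul_of_mem {d n : ℕ} {c : K} (hc : c ∈ Ffield p d) (x : K) :
    Tmap p d n (x * c) = Tmap p d n x * c := by
  rw [Tmap, Tmap, sum_mul]
  exact sum_congr rfl fun i _ => by rw [mul_pow, pow_pow_eq_self_of_dvd hc (dvd_mul_right d i)]

theorem Tmap_eq_zero_of_mem {d l k : ℕ} {y : K} (hy : y ∈ Ffield p d) (hdk : d ∣ k) (hlk : l ∣ k)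
    (hp : p ∣ k / d.lcm l) : Tmap p l k y = 0 := by
  have hlL : l ∣ d.lcm l := Nat.dvd_lcm_right d l
  have hL : Periodic (fun m => y ^ p ^ m) (d.lcm l) := by
    simpa [Nat.div_mul_cancel (Nat.dvd_lcm_left d l)] using
      (periodic_pow_pow hy).nat_mul (d.lcm l / d)
  rw [← Nat.mul_div_cancel' hlL] at hL
  rw [Tmap, ← Nat.div_mul_div (Nat.lcm_dvd hdk hlk) hlL, hL.comp_mul_left.sum_range_mul,
    nsmul_eq_mul, (CharP.cast_eq_zero_iff K p _).2 hp, zero_mul]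

theorem Tmap_sub_pow {l k : ℕ} (hlk : l ∣ k) (c : K) :
    Tmap p l k (c - c ^ p ^ l) = c - c ^ p ^ k := by
  have hstep : ∀ i, (c - c ^ p ^ l) ^ p ^ (l * i) = c ^ p ^ (l * i) - c ^ p ^ (l * (i + 1)) :=
    fun i => by rw [sub_pow_char_pow, ← pow_mul, ← pow_add, mul_add_one, add_comm l]
  rw [Tmap, sum_congr rfl fun i _ => hstep i, sum_range_sub' (fun i => c ^ p ^ (l * i)),
    Nat.mul_div_cancel' hlk, mul_zero, pow_zero, pow_one]

theorem Smap_two_mul {l : ℕ} (hl : 0 < l) (x : K) : Smap p l (2 * l) x = x - x ^ p ^ l := by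
  simp [Smap, Nat.mul_div_cancel _ hl, sum_range_succ, sub_eq_add_neg]

theorem hilbert90Sum_pow {n k : ℕ} {a δ : K} (ha : a ∈ Ffield p n) (hδ : δ ∈ Ffield p n)
    (hTa : Tmap p (n.gcd k) n a = 0) (hTδ : Tmap p (n.gcd k) n δ = 1) :
    hilbert90Sum (fun j => δ ^ p ^ (k * j)) (fun i => a ^ p ^ (k * i)) (n / n.gcd k) ^ p ^ k =
      hilbert90Sum (fun j => δ ^ p ^ (k * j)) (fun i => a ^ p ^ (k * i)) (n / n.gcd k) - a := by
  have hσ : ∀ (x : K) (i : ℕ),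
      iterateFrobenius K p k (x ^ p ^ (k * i)) = x ^ p ^ (k * (i + 1)) := fun x i => by
    rw [iterateFrobenius_def, ← pow_mul, ← pow_add, mul_add_one]
  have hn : n ∣ k * (n / n.gcd k) := ⟨k / n.gcd k, by
    rw [← Nat.mul_div_assoc _ (Nat.gcd_dvd_left n k),
      ← Nat.mul_div_assoc _ (Nat.gcd_dvd_right n k), mul_comm]⟩
  have := map_hilbert90Sum (iterateFrobenius K p k) (hσ δ) (hσ a)
    (by simpa using pow_pow_eq_self_of_dvd hδ hn)
    (by rw [(periodic_pow_pow hδ).sum_range_div_gcd_comp_mul]; exact hTδ)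
    (by rw [(periodic_pow_pow ha).sum_range_div_gcd_comp_mul]; exact hTa)
  simpa [iterateFrobenius_def] using this

theorem Smap_hilbert90Sum_mem_and_Tmap_eq {n k l : ℕ} (hl : 0 < l) (hlk : l ∣ k) {a δ : K}
    (ha : a ∈ Ffield p n) (hδ : δ ∈ Ffield p n)
    (hTa : Tmap p (n.gcd k) n a = 0) (hTδ : Tmap p (n.gcd k) n δ = 1) :
    Smap p l (2 * l) (hilbert90Sum (fun j => δ ^ p ^ (k * j)) (fun i => a ^ p ^ (k * i))
        (n / n.gcd k)) ∈ Ffield p n ∧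
      Tmap p l k (Smap p l (2 * l) (hilbert90Sum (fun j => δ ^ p ^ (k * j))
        (fun i => a ^ p ^ (k * i)) (n / n.gcd k))) = a := by
  set c := hilbert90Sum (fun j => δ ^ p ^ (k * j)) (fun i => a ^ p ^ (k * i)) (n / n.gcd k)
  have hc : c ∈ ffieldSubfield p n := sum_mem fun i _ => sum_mem fun j _ =>
    mul_mem (pow_mem (mem_ffieldSubfield.2 hδ) _) (pow_mem (mem_ffieldSubfield.2 ha) _)
  rw [Smap_two_mul hl]
  refine ⟨mem_ffieldSubfield.1 (sub_mem hc (pow_mem hc _)), ?_⟩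
  rw [Tmap_sub_pow hlk, hilbert90Sum_pow ha hδ hTa hTδ, sub_sub_cancel]

theorem exists_mem_Ffield_eval_ne_zero {n : ℕ} (hn : n ≠ 0) {g : K[X]} (hg : g ≠ 0)
    (hdeg : g.natDegree < p ^ n) : ∃ z ∈ Ffield p n, g.eval z ≠ 0 := by
  classical
  by_contra! h
  set f : K[X] := X ^ p ^ n - X
  refine hg (eq_zero_of_natDegree_lt_card_of_eval_eq_zero' g f.roots.toFinset
    (fun z hz => h z ?_) ?_)
  · show z ^ p ^ n = z
    simpa [f, sub_eq_zero] using (mem_roots'.1 (Multiset.mem_toFinset.1 hz)).2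
  · rwa [Multiset.toFinset_card_of_nodup
        (nodup_roots (galois_poly_separable p _ (dvd_pow_self p hn))),
      IsAlgClosed.card_roots_eq_natDegree,
      FiniteField.X_pow_card_pow_sub_X_natDegree_eq K hn (Fact.out : p.Prime).one_lt]

variable (p) in
theorem exists_mem_Ffield_Tmap_ne_zero {d n : ℕ} (hn : 0 < n) (hd : 0 < d) (hdn : d ∣ n) :
    ∃ z ∈ Ffield p n, Tmap p d n z ≠ 0 := by
  have hp := (Fact.out : p.Prime).one_lt
  have hlt : ∀ i ∈ range (n / d), p ^ (d * i) < p ^ n := fun i hi => by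
    refine Nat.pow_lt_pow_right hp ?_
    calc d * i < d * (n / d) := (Nat.mul_lt_mul_left hd).2 (mem_range.1 hi)
      _ = n := Nat.mul_div_cancel' hdn
  set g : K[X] := ∑ i ∈ range (n / d), X ^ p ^ (d * i)
  have hcoeff : g.coeff 1 = 1 := by
    rw [finsetSum_coeff, sum_eq_single 0]
    · simp
    · intro i _ hi
      rw [coeff_X_pow, if_neg (Nat.one_lt_pow (mul_ne_zero hd.ne' hi) hp).ne]
    · simp [Nat.div_pos (Nat.le_of_dvd hn hdn) hd]
  have hdeg : g.natDegree < p ^ n := by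
    refine lt_of_le_of_lt (natDegree_sum_le_of_forall_le _ _ fun i hi => ?_)
      (Nat.sub_lt (by positivity) one_pos)
    rw [natDegree_X_pow]
    exact Nat.le_sub_one_of_lt (hlt i hi)
  obtain ⟨z, hz, hgz⟩ :=
    exists_mem_Ffield_eval_ne_zero hn.ne' (fun h => by simp [h] at hcoeff) hdeg
  exact ⟨z, hz, by simpa [g, eval_finsetSum, Tmap] using hgz⟩

variable (p) in
theorem exists_mem_Ffield_Tmap_eq_one {d n : ℕ} (hn : 0 < n) (hd : 0 < d) (hdn : d ∣ n) :
    ∃ δ ∈ Ffield p n, Tmap p d n δ = 1 := by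
  obtain ⟨z, hz, hTz⟩ := exists_mem_Ffield_Tmap_ne_zero p hn hd hdn
  have hw : Tmap p d n z ∈ ffieldSubfield p d := Tmap_mem_Ffield hz hdn
  have hwn : Tmap p d n z ∈ ffieldSubfield p n := pow_pow_eq_self_of_dvd hw hdn
  refine ⟨z * (Tmap p d n z)⁻¹,
    mem_ffieldSubfield.1 (mul_mem (mem_ffieldSubfield.2 hz) (inv_mem hwn)), ?_⟩
  rw [Tmap_mul_of_mem (mem_ffieldSubfield.1 (inv_mem hw)), mul_inv_cancel₀ hTz]

end Ffield

theorem stmt13_general (p : ℕ) [Fact p.Prime] (n k l : ℕ) (hn : 0 < n) (hl : 0 < l)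
    (hlk : l ∣ k) (d L : ℕ) (hd : d = Nat.gcd n k) (hL : L = Nat.lcm d l)
    (hpk : p ∣ k / L) (a : AlgebraicClosure (ZMod p)) (ha : a ∈ Ffield p n) :
    ((∃ x ∈ Ffield p n, Tmap p l k x = a) ↔ Tmap p d n a = 0) ∧
    (Tmap p d n a = 0 → ∀ δ ∈ Ffield p n, Tmap p d n δ = 1 →
      ∀ x₀, x₀ = Smap p l (2 * l) (∑ i ∈ Finset.range (n / d - 1),
          ∑ j ∈ Finset.Ico (i + 1) (n / d), δ ^ p ^ (k * j) * a ^ p ^ (k * i)) →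
        x₀ ∈ Ffield p n ∧ Tmap p l k x₀ = a) := by
  subst hd hL
  refine ⟨⟨?_, fun hTa => ?_⟩, fun hTa δ hδ hTδ x₀ hx₀ => ?_⟩
  · rintro ⟨x, hx, rfl⟩
    rw [Tmap_comm]
    exact Tmap_eq_zero_of_mem (Tmap_mem_Ffield hx (Nat.gcd_dvd_left n k)) (Nat.gcd_dvd_right n k)
      hlk hpk
  · obtain ⟨δ, hδ, hTδ⟩ := exists_mem_Ffield_Tmap_eq_one p hn (Nat.gcd_pos_of_pos_left k hn)
      (Nat.gcd_dvd_left n k)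
    exact ⟨_, Smap_hilbert90Sum_mem_and_Tmap_eq hl hlk ha hδ hTa hTδ⟩
  · subst hx₀
    exact Smap_hilbert90Sum_mem_and_Tmap_eq hl hlk ha hδ hTa hTδ

theorem stmt13 (p : ℕ) [Fact p.Prime] (n k l : ℕ) (hn : 0 < n) (hk : 0 < k) (hl : 0 < l)
    (hlk : l ∣ k) (d L : ℕ) (hd : d = Nat.gcd n k) (hL : L = Nat.lcm d l)
    (hpk : p ∣ k / L) (a : AlgebraicClosure (ZMod p)) (ha : a ∈ Ffield p n) :
    ((∃ x ∈ Ffield p n, Tmap p l k x = a) ↔ Tmap p d n a = 0) ∧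
    (Tmap p d n a = 0 → ∀ δ ∈ Ffield p n, Tmap p d n δ = 1 →
      ∀ x₀, x₀ = Smap p l (2 * l) (∑ i ∈ Finset.range (n / d - 1),
          ∑ j ∈ Finset.Ico (i + 1) (n / d), δ ^ p ^ (k * j) * a ^ p ^ (k * i)) →
        x₀ ∈ Ffield p n ∧ Tmap p l k x₀ = a) :=
  stmt13_general p n k l hn hl hlk d L hd hL hpk a ha
end

section
/- Let p be an odd prime, let n, k, l be positive integers with l | k and k/l even, and set d = gcd(n,k), e = gcd(n,l), L = lcm(d,l). Suppose d/e is even and p does not divide k/L. Let a ∈ 𝔽_{p^n}. Then the equation S_l^k(X) = a has a solution in 𝔽_{p^n} if and only if T_e^{2e}(T_d^n(a)) = 0. Moreover, in that case, for any δ ∈ 𝔽_{p^n} with T_d^n(δ) = 1 and any δ₁ ∈ 𝔽_{p^d} with T_{2e}^d(δ₁) = 1, setting y₀ = Σ_{i=0}^{n/d−2} Σ_{j=i+1}^{n/d−1} δ^{p^{kj}} (T_l^{2l}(a))^{p^{ki}}, the element x₀ = y₀ + (L/(2k))·(a − S_l^k(y₀))·δ₁ lies in 𝔽_{p^n} and satisfies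 S_l^k(x₀) = a, where L/(2k) denotes the element (2k/L)^{−1} in 𝔽_p. -/
open Finset

/-!
Write `b = T_l^{2l}(a) = a + a^{p^l}` and `c = T_d^n(a) ∈ 𝔽_{p^d}`. Since `k/l` is even, `S = S_l^k`
satisfies `S(x) + S(x)^{p^l} = x - x^{p^k}`. Hence `S(x) = a` forces `b = x - x^{p^k}`, whose trace
`T_d^n` telescopes to `0` (as `gcd(n, k) = d`, summing `x^{p^{kj}}` over `j < n/d` is the same as
summing `x^{p^{dj}}`), while `T_d^n(b) = c + c^{p^l}`. Both `c + c^{p^l} = 0` and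
`T_e^{2e}(c) = c + c^{p^e} = 0` put `c` in `𝔽_{p^{2e}}`, on which `x^{p^l} = x^{p^e}` because
`l/e` is odd; so the two conditions agree.

Conversely, if `T_d^n(b) = 0`, then `y₀` is the explicit additive Hilbert 90 solution of
`y - y^{p^k} = b`, so `r = a - S(y₀)` satisfies `r^{p^l} = -r`, and
`S(r δ₁) = r · ∑_{i < k/l} δ₁^{p^{li}}`. This sum runs over `k/L` periods of length `d/e`, each
equal to `T_e^d(δ₁) = T_e^{2e}(T_{2e}^d(δ₁)) = 2`, which is why `2k/L` must be invertible mod `p`.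
-/

open Function Polynomial

section Sums

variable {M : Type*} [AddCommMonoid M]

theorem Finset.sum_range_mul_eq_sum_sum (f : ℕ → M) (t s : ℕ) :
    ∑ i ∈ range (t * s), f i = ∑ q ∈ range t, ∑ r ∈ range s, f (s * q + r) := by
  induction t with
  | zero => simp
  | succ t ih => rw [Nat.succ_mul, sum_range_add, ih, sum_range_succ, mul_comm t s]

theorem Function.Periodic.sum_range_mul_s16 {f : ℕ → M} {s : ℕ} (hf : Periodic f s) (t : ℕ) :
    ∑ i ∈ range (t * s), f i = t • ∑ i ∈ range s, f i := by
  have hblock : ∀ q r, f (s * q + r) = f r := fun q r => by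
    rw [add_comm, mul_comm]; exact hf.nat_mul q r
  simp [sum_range_mul_eq_sum_sum, hblock]

theorem Function.Periodic.sum_range_mul_of_coprime {f : ℕ → M} {m c : ℕ} (hf : Periodic f m)
    (hc : c.Coprime m) : ∑ j ∈ range m, f (c * j) = ∑ j ∈ range m, f j := by
  classical
  have hinj : Set.InjOn (fun j => c * j % m) (range m) := fun i hi j hj hij =>
    Nat.ModEq.eq_of_lt_of_lt (Nat.ModEq.cancel_left_of_coprime (Nat.coprime_comm.1 hc) hij)
      (mem_range.1 hi) (mem_range.1 hj)
  have himage : (range m).image (fun j => c * j % m) = range m := by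
    refine eq_of_subset_of_card_le (fun i hi => ?_) (card_image_of_injOn hinj).ge
    obtain ⟨j, hj, rfl⟩ := mem_image.1 hi
    exact mem_range.2 (Nat.mod_lt _ (Nat.pos_of_ne_zero (by rintro rfl; simp at hj)))
  calc ∑ j ∈ range m, f (c * j) = ∑ j ∈ range m, f (c * j % m) :=
        sum_congr rfl fun j _ => (hf.map_mod_nat _).symm
    _ = ∑ j ∈ range m, f j := by rw [← sum_image hinj, himage]

theorem Finset.sum_range_succ_eq_of_eq {G : Type*} [AddCancelCommMonoid G] {f : ℕ → G} {m : ℕ}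
    (h : f m = f 0) : ∑ i ∈ range m, f (i + 1) = ∑ i ∈ range m, f i := by
  have := (sum_range_succ' f m).symm.trans (sum_range_succ f m)
  rwa [h, add_left_inj] at this

end Sums

section Hilbert90

variable {R : Type*} [CommRing R] (σ : R →+* R)

def hilbert90Witness (m : ℕ) (δ b : R) : R :=
  ∑ i ∈ range (m - 1), ∑ j ∈ Ico (i + 1) m, σ^[j] δ * σ^[i] b

theorem hilbert90Witness_sub_map {m : ℕ} {δ b : R} (hδ : σ^[m] δ = δ)
    (hδ1 : ∑ j ∈ range m, σ^[j] δ = 1) (hb : ∑ j ∈ range m, σ^[j] b = 0) :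
    hilbert90Witness σ m δ b - σ (hilbert90Witness σ m δ b) = b := by
  set B : ℕ → R := fun j => ∑ i ∈ range j, σ^[i] b with hB
  have hy : hilbert90Witness σ m δ b = ∑ j ∈ range m, σ^[j] δ * B j := by
    rw [hilbert90Witness, sum_comm' (t' := range m) (s' := range)
      (fun i j => by simp only [mem_range, mem_Ico]; omega)]
    simp_rw [hB, mul_sum]
  have hσB : ∀ j, σ (B j) = B (j + 1) - b := fun j => by
    simp only [hB, map_sum, ← iterate_succ_apply' σ, sum_range_succ' _ j, iterate_zero_apply,
      add_sub_cancel_right]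
  have hσy : σ (∑ j ∈ range m, σ^[j] δ * B j)
      = ∑ j ∈ range m, σ^[j + 1] δ * B (j + 1) - (∑ j ∈ range m, σ^[j + 1] δ) * b := by
    simp only [map_sum, map_mul, hσB, iterate_succ_apply', mul_sub, sum_sub_distrib, sum_mul]
  rw [hy, hσy, sum_range_succ_eq_of_eq (f := fun j => σ^[j] δ * B j) (by simp [hB, hb]),
    sum_range_succ_eq_of_eq (f := fun j => σ^[j] δ) hδ, hδ1]
  ring

end Hilbert90

theorem iterate_iterateFrobenius {R : Type*} [CommSemiring R] (p : ℕ) [ExpChar R p] (k j : ℕ)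
    (x : R) : (iterateFrobenius R p k)^[j] x = x ^ p ^ (k * j) := by
  rw [show ⇑(iterateFrobenius R p k) = fun x => x ^ p ^ k from rfl, pow_iterate, pow_mul]

theorem hilbert90Witness_iterateFrobenius {R : Type*} [CommRing R] (p : ℕ) [ExpChar R p]
    (k m : ℕ) (δ b : R) : hilbert90Witness (iterateFrobenius R p k) m δ b =
      ∑ i ∈ range (m - 1), ∑ j ∈ Ico (i + 1) m, δ ^ p ^ (k * j) * b ^ p ^ (k * i) := by
  simp only [hilbert90Witness, iterate_iterateFrobenius]

section Arithmetic

theorem Nat.dvd_mul_div_gcd (n k : ℕ) : n ∣ k * (n / Nat.gcd n k) := by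
  conv_lhs => rw [← Nat.mul_div_cancel' (Nat.gcd_dvd_left n k)]
  exact mul_dvd_mul_right (Nat.gcd_dvd_right n k) _

theorem Nat.gcd_two_mul_right_of_two_mul_gcd_dvd {d l : ℕ} (h : 2 * Nat.gcd d l ∣ d) :
    Nat.gcd d (2 * l) = 2 * Nat.gcd d l :=
  Nat.dvd_antisymm
    (Nat.gcd_mul_left 2 d l ▸
      Nat.dvd_gcd ((Nat.gcd_dvd_left _ _).trans (dvd_mul_left d 2)) (Nat.gcd_dvd_right _ _))
    (Nat.dvd_gcd h (mul_dvd_mul_left 2 (Nat.gcd_dvd_right d l)))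

theorem Nat.mod_two_mul_gcd_of_two_mul_gcd_dvd {d l : ℕ} (hl : 0 < l) (h : 2 * Nat.gcd d l ∣ d) :
    l % (2 * Nat.gcd d l) = Nat.gcd d l := by
  have he : 0 < Nat.gcd d l := Nat.gcd_pos_of_pos_right d hl
  have hodd : Odd (l / Nat.gcd d l) := by
    rw [← Nat.not_even_iff_odd, even_iff_two_dvd]
    intro hl2
    have hd2 : 2 ∣ d / Nat.gcd d l :=
      Nat.dvd_div_of_mul_dvd (by rwa [mul_comm] at h)
    have := Nat.dvd_gcd hd2 hl2
    rw [Nat.coprime_div_gcd_div_gcd he] at this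
    omega
  obtain ⟨q, hq⟩ := hodd
  have hl' : l = Nat.gcd d l + 2 * Nat.gcd d l * q := by
    have := Nat.div_mul_cancel (Nat.gcd_dvd_right d l)
    rw [hq] at this
    linarith
  calc l % (2 * Nat.gcd d l) = (Nat.gcd d l + 2 * Nat.gcd d l * q) % (2 * Nat.gcd d l) := by
        rw [← hl']
    _ = Nat.gcd d l := by rw [Nat.add_mul_mod_self_left, Nat.mod_eq_of_lt (by omega)]

end Arithmetic

section FiniteFields

variable {p : ℕ} [Fact p.Prime]
local notation "F" => AlgebraicClosure (ZMod p)

theorem mem_Ffield_iff_isPeriodicPt {m : ℕ} {x : F} :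
    x ∈ Ffield p m ↔ IsPeriodicPt (frobenius F p) m x := by
  rw [IsPeriodicPt, IsFixedPt, iterate_frobenius]; rfl

theorem Ffield.mono {u v : ℕ} (huv : u ∣ v) {x : F} (hx : x ∈ Ffield p u) : x ∈ Ffield p v :=
  mem_Ffield_iff_isPeriodicPt.2 ((mem_Ffield_iff_isPeriodicPt.1 hx).trans_dvd huv)

theorem Ffield.mem_gcd {u v : ℕ} {x : F} (hu : x ∈ Ffield p u) (hv : x ∈ Ffield p v) :
    x ∈ Ffield p (Nat.gcd u v) :=
  mem_Ffield_iff_isPeriodicPt.2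
    ((mem_Ffield_iff_isPeriodicPt.1 hu).gcd (mem_Ffield_iff_isPeriodicPt.1 hv))

theorem Ffield.periodic {m : ℕ} {x : F} (hx : x ∈ Ffield p m) : Periodic (fun t => x ^ p ^ t) m :=
  fun t => by dsimp only; rw [pow_add, pow_mul', show x ^ p ^ m = x from hx]

-- Membership in it is definitionally membership in `Ffield p m`, so the closure lemmas of
-- `Subfield` apply directly to hypotheses `x ∈ Ffield p m`.
variable (p) in
noncomputable def Ffield.subfield (m : ℕ) : Subfield F :=
  (iterateFrobenius F p m).eqLocusField (RingHom.id F)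

theorem pow_char_pow_mul_of_add_eq_zero {s : ℕ} {x : F} (hx : x + x ^ p ^ s = 0) (j : ℕ) :
    x ^ p ^ (s * j) = (-1) ^ j * x := by
  induction j with
  | zero => simp
  | succ j ih =>
    rw [mul_add_one, pow_add, pow_mul, ih, mul_pow, ← pow_mul, mul_comm j, pow_mul,
      neg_one_pow_char_pow, eq_neg_of_add_eq_zero_right hx]
    ring

theorem Ffield.mem_two_mul_of_add_eq_zero {s : ℕ} {x : F} (hx : x + x ^ p ^ s = 0) :
    x ∈ Ffield p (2 * s) := by
  simp [Ffield, mul_comm 2, pow_char_pow_mul_of_add_eq_zero hx 2]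

theorem Tmap_add (u v : ℕ) (x y : F) : Tmap p u v (x + y) = Tmap p u v x + Tmap p u v y := by
  simp only [Tmap, add_pow_char_pow, sum_add_distrib]

theorem Tmap_pow_char_pow (u v s : ℕ) (x : F) : Tmap p u v (x ^ p ^ s) = Tmap p u v x ^ p ^ s := by
  simp only [Tmap, sum_pow_char_pow, ← pow_mul, ← pow_add, add_comm s]

theorem Tmap_two_mul {u : ℕ} (hu : 0 < u) (x : F) : Tmap p u (2 * u) x = x + x ^ p ^ u := by
  simp [Tmap, Nat.mul_div_cancel _ hu, sum_range_succ]

theorem Tmap_mem_Ffield_s16 {u v : ℕ} (huv : u ∣ v) {x : F} (hx : x ∈ Ffield p v) :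
    Tmap p u v x ∈ Ffield p u := by
  show (∑ i ∈ range (v / u), x ^ p ^ (u * i)) ^ p ^ u = _
  rw [sum_pow_char_pow]
  simp only [← pow_mul, ← pow_add, ← mul_add_one]
  refine sum_range_succ_eq_of_eq (f := fun i => x ^ p ^ (u * i)) ?_
  simpa [Nat.mul_div_cancel' huv] using show x ^ p ^ v = x from hx

theorem Tmap_mul_left {u v : ℕ} {c : F} (hc : c ∈ Ffield p u) (x : F) :
    Tmap p u v (c * x) = c * Tmap p u v x := by
  simp only [Tmap, mul_sum]
  exact sum_congr rfl fun i _ => by rw [mul_pow, Ffield.mono (dvd_mul_right u i) hc]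

theorem Tmap_Tmap {u w v : ℕ} (hw : 0 < w) (huw : u ∣ w) (hwv : w ∣ v) (x : F) :
    Tmap p u w (Tmap p w v x) = Tmap p u v x := by
  obtain ⟨s, rfl⟩ := huw
  obtain ⟨t, rfl⟩ := hwv
  have hu : 0 < u := Nat.pos_of_mul_pos_right hw
  have hst : u * s * t / u = t * s := by rw [mul_assoc, Nat.mul_div_cancel_left _ hu, mul_comm]
  simp only [Tmap, Nat.mul_div_cancel_left _ hu, Nat.mul_div_cancel_left _ hw, hst,
    sum_range_mul_eq_sum_sum, sum_pow_char_pow, ← pow_mul, ← pow_add]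
  rw [sum_comm]
  exact sum_congr rfl fun j _ => sum_congr rfl fun i _ => by ring_nf

theorem sum_pow_char_pow_mul_eq_Tmap_gcd {N K : ℕ} (hN : 0 < N) {x : F} (hx : x ∈ Ffield p N) :
    ∑ j ∈ range (N / Nat.gcd N K), x ^ p ^ (K * j) = Tmap p (Nat.gcd N K) N x := by
  have hg : 0 < Nat.gcd N K := Nat.gcd_pos_of_pos_left K hN
  have hper : Periodic (fun j => x ^ p ^ (Nat.gcd N K * j)) (N / Nat.gcd N K) := fun j => by
    simp only [mul_add, Nat.mul_div_cancel' (Nat.gcd_dvd_left N K)]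
    exact Ffield.periodic hx _
  have := hper.sum_range_mul_of_coprime (Nat.coprime_div_gcd_div_gcd hg).symm
  simpa only [Tmap, ← mul_assoc, Nat.mul_div_cancel' (Nat.gcd_dvd_right N K)] using this

theorem exists_mem_Ffield_eval_ne_zero_s16 {v : ℕ} (hv : 0 < v) {f : F[X]} (hf : f ≠ 0)
    (hdeg : f.natDegree < p ^ v) : ∃ z ∈ Ffield p v, f.eval z ≠ 0 := by
  by_contra! h
  have hp : 1 < p := (Fact.out : p.Prime).one_lt
  set g : (ZMod p)[X] := X ^ p ^ v - X
  have hg : g ≠ 0 := FiniteField.X_pow_card_pow_sub_X_ne_zero _ hv.ne' hp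
  have hcard : Fintype.card (g.rootSet F) = p ^ v := by
    rw [card_rootSet_eq_natDegree (galois_poly_separable p _ (dvd_pow_self p hv.ne'))
      (IsAlgClosed.splits _), FiniteField.X_pow_card_pow_sub_X_natDegree_eq _ hv.ne' hp]
  refine hf (eq_zero_of_natDegree_lt_card_of_eval_eq_zero f Subtype.val_injective
    (fun z => h z ?_) (hcard ▸ hdeg))
  show z.1 ^ p ^ v = z.1
  simpa [g, sub_eq_zero] using (mem_rootSet_of_ne hg).1 z.2

theorem exists_Tmap_eq_one {u v : ℕ} (hu : 0 < u) (huv : u ∣ v) (hv : 0 < v) :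
    ∃ z ∈ Ffield p v, Tmap p u v z = 1 := by
  have hp : 1 < p := (Fact.out : p.Prime).one_lt
  set f : F[X] := ∑ i ∈ range (v / u), X ^ p ^ (u * i)
  have hcoeff : f.coeff 1 = 1 := by
    have hvu : 0 < v / u := Nat.div_pos (Nat.le_of_dvd hv huv) hu
    rw [finsetSum_coeff, sum_eq_single 0 (fun i _ hi => ?_) (fun h => absurd (mem_range.2 hvu) h)]
    · simp
    · rw [coeff_X_pow, if_neg (Nat.one_lt_pow (by positivity) hp).ne]
  have hdeg : f.natDegree < p ^ v := by
    refine lt_of_le_of_lt (natDegree_sum_le_of_forall_le _ _ fun i hi => ?_)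
      (Nat.pow_lt_pow_right hp (Nat.sub_one_lt_of_lt hv))
    rw [natDegree_X_pow]
    exact Nat.pow_le_pow_right hp.le
      (Nat.le_sub_one_of_lt ((Nat.lt_div_iff_mul_lt' huv i).1 (mem_range.1 hi)))
  obtain ⟨z, hz, hfz⟩ := exists_mem_Ffield_eval_ne_zero_s16 hv (fun h => by simp [h] at hcoeff) hdeg
  have hTz : Tmap p u v z = f.eval z := by simp [f, Tmap, eval_finsetSum]
  have hinv : (Tmap p u v z)⁻¹ ∈ Ffield p u :=
    (Ffield.subfield p u).inv_mem (Tmap_mem_Ffield_s16 huv hz)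
  refine ⟨(Tmap p u v z)⁻¹ * z, (Ffield.subfield p v).mul_mem (Ffield.mono huv hinv) hz, ?_⟩
  rw [Tmap_mul_left hinv, inv_mul_cancel₀ (hTz ▸ hfz)]

theorem Smap_add (l k : ℕ) (x y : F) : Smap p l k (x + y) = Smap p l k x + Smap p l k y := by
  simp only [Smap, add_pow_char_pow, mul_add, sum_add_distrib]

theorem Smap_mul_left {c : F} (hc : c ∈ Ffield p 1) (l k : ℕ) (x : F) :
    Smap p l k (c * x) = c * Smap p l k x := by
  simp only [Smap, mul_sum]
  exact sum_congr rfl fun i _ => by rw [mul_pow, Ffield.mono (one_dvd _) hc]; ring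

theorem Smap_mem_Ffield {m : ℕ} {x : F} (hx : x ∈ Ffield p m) (l k : ℕ) :
    Smap p l k x ∈ Ffield p m :=
  sum_mem fun i _ => (Ffield.subfield p m).mul_mem (pow_mem (neg_mem (one_mem _)) i) (pow_mem hx _)

theorem Smap_add_pow_char_pow {l k : ℕ} (hlk : l ∣ k) (hkl : Even (k / l)) (x : F) :
    Smap p l k x + Smap p l k x ^ p ^ l = x - x ^ p ^ k := by
  set f : ℕ → F := fun i => (-1) ^ i * x ^ p ^ (l * i)
  have hshift : Smap p l k x ^ p ^ l = -∑ i ∈ range (k / l), f (i + 1) := by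
    simp only [Smap, f, sum_pow_char_pow, ← sum_neg_distrib, mul_pow, ← pow_mul, ← pow_add]
    exact sum_congr rfl fun i _ => by
      rw [mul_comm i, pow_mul, neg_one_pow_char_pow, mul_add_one, pow_succ]; ring
  rw [hshift, ← sub_eq_add_neg, Smap, ← sum_sub_distrib, sum_range_sub' f]
  simp [f, hkl.neg_one_pow, Nat.mul_div_cancel' hlk]

theorem Smap_mul_of_add_pow_char_pow_eq_zero {l k : ℕ} {r : F} (hr : r + r ^ p ^ l = 0) (z : F) :
    Smap p l k (r * z) = r * ∑ i ∈ range (k / l), z ^ p ^ (l * i) := by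
  simp only [Smap, mul_sum]
  refine sum_congr rfl fun i _ => ?_
  rw [mul_pow, pow_char_pow_mul_of_add_eq_zero hr, ← mul_assoc, ← mul_assoc, ← pow_add,
    Even.neg_one_pow ⟨i, rfl⟩, one_mul]

theorem Tmap_two_mul_gcd_eq_zero_iff {d l : ℕ} (hl : 0 < l) (h : 2 * Nat.gcd d l ∣ d) {c : F}
    (hc : c ∈ Ffield p d) : Tmap p (Nat.gcd d l) (2 * Nat.gcd d l) c = 0 ↔ c + c ^ p ^ l = 0 := by
  have hpow : ∀ {y : F}, y ∈ Ffield p (2 * Nat.gcd d l) → y ^ p ^ l = y ^ p ^ Nat.gcd d l :=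
    fun hy => by
      rw [← Nat.mod_two_mul_gcd_of_two_mul_gcd_dvd hl h]
      exact (Ffield.periodic hy).map_mod_nat l |>.symm
  rw [Tmap_two_mul (Nat.gcd_pos_of_pos_right d hl)]
  constructor
  · intro h0
    rwa [hpow (Ffield.mem_two_mul_of_add_eq_zero h0)]
  · intro h0
    have h2e : c ∈ Ffield p (2 * Nat.gcd d l) := Nat.gcd_two_mul_right_of_two_mul_gcd_dvd h ▸
      Ffield.mem_gcd hc (Ffield.mem_two_mul_of_add_eq_zero h0)
    rwa [← hpow h2e]

theorem Tmap_gcd_sub_pow_char_pow_eq_zero {n k : ℕ} (hn : 0 < n) {x : F} (hx : x ∈ Ffield p n) :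
    Tmap p (Nat.gcd n k) n (x - x ^ p ^ k) = 0 := by
  rw [← sum_pow_char_pow_mul_eq_Tmap_gcd hn ((Ffield.subfield p n).sub_mem hx (pow_mem hx _))]
  simp only [sub_pow_char_pow, ← pow_mul, ← pow_add, add_comm k, ← mul_add_one]
  rw [sum_range_sub' (fun j => x ^ p ^ (k * j)), Ffield.mono (Nat.dvd_mul_div_gcd n k) hx]
  simp

theorem hilbert90Witness_sub_pow_char_pow {n k : ℕ} (hn : 0 < n) {δ b : F} (hδ : δ ∈ Ffield p n)
    (hδ1 : Tmap p (Nat.gcd n k) n δ = 1) (hb : b ∈ Ffield p n)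
    (hb0 : Tmap p (Nat.gcd n k) n b = 0) :
    hilbert90Witness (iterateFrobenius F p k) (n / Nat.gcd n k) δ b -
      hilbert90Witness (iterateFrobenius F p k) (n / Nat.gcd n k) δ b ^ p ^ k = b := by
  refine hilbert90Witness_sub_map _ ?_ ?_ ?_ <;> simp only [iterate_iterateFrobenius]
  · exact Ffield.mono (Nat.dvd_mul_div_gcd n k) hδ
  · rwa [sum_pow_char_pow_mul_eq_Tmap_gcd hn hδ]
  · rwa [sum_pow_char_pow_mul_eq_Tmap_gcd hn hb]

theorem sum_pow_char_pow_mul_eq_of_Tmap_eq_one {d l k : ℕ} (hd : 0 < d) (hl : 0 < l)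
    (h : 2 * Nat.gcd d l ∣ d) (hLk : Nat.lcm d l ∣ k) {δ₁ : F} (hδ₁ : δ₁ ∈ Ffield p d)
    (h1 : Tmap p (2 * Nat.gcd d l) d δ₁ = 1) :
    ∑ i ∈ range (k / l), δ₁ ^ p ^ (l * i) = ((2 * (k / Nat.lcm d l) : ℕ) : F) := by
  have he : 0 < Nat.gcd d l := Nat.gcd_pos_of_pos_right d hl
  have hde : 0 < d / Nat.gcd d l := Nat.div_pos (Nat.le_of_dvd hd (Nat.gcd_dvd_left d l)) he
  have hL : l * (d / Nat.gcd d l) = Nat.lcm d l := by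
    rw [Nat.lcm, mul_comm d l, Nat.mul_div_assoc l (Nat.gcd_dvd_left d l)]
  have hkl : k / l = k / Nat.lcm d l * (d / Nat.gcd d l) := by
    obtain ⟨q, rfl⟩ := hLk
    rw [← hL, Nat.mul_div_cancel_left _ (Nat.mul_pos hl hde), mul_assoc,
      Nat.mul_div_cancel_left _ hl, mul_comm]
  have hper : Periodic (fun i => δ₁ ^ p ^ (l * i)) (d / Nat.gcd d l) := fun i => by
    dsimp only
    rw [mul_add, hL]
    exact Ffield.periodic (Ffield.mono (Nat.dvd_lcm_left d l) hδ₁) _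
  rw [hkl, hper.sum_range_mul_s16, sum_pow_char_pow_mul_eq_Tmap_gcd hd hδ₁,
    ← Tmap_Tmap (by positivity) (dvd_mul_left _ 2) h, h1, Tmap_two_mul he, one_pow, nsmul_eq_mul]
  push_cast
  ring

theorem Smap_add_inv_mul_sub_eq {l k s : ℕ} (hs : (s : F) ≠ 0) {a y δ₁ : F}
    (hy : Smap p l k y + Smap p l k y ^ p ^ l = a + a ^ p ^ l)
    (hδ₁ : ∑ i ∈ range (k / l), δ₁ ^ p ^ (l * i) = s) :
    Smap p l k (y + (s : F)⁻¹ * (a - Smap p l k y) * δ₁) = a := by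
  have hr : (a - Smap p l k y) + (a - Smap p l k y) ^ p ^ l = 0 := by
    rw [sub_pow_char_pow]
    linear_combination -hy
  have hs1 : (s : F)⁻¹ ∈ Ffield p 1 := (Ffield.subfield p 1).inv_mem (natCast_mem _ s)
  rw [Smap_add, mul_assoc, Smap_mul_left hs1, Smap_mul_of_add_pow_char_pow_eq_zero hr, hδ₁,
    mul_left_comm, inv_mul_cancel₀ hs, mul_one, add_sub_cancel]

end FiniteFields

theorem stmt16_general (p : ℕ) [Fact p.Prime] (hp2 : p ≠ 2) (n k l : ℕ)
    (hn : 0 < n) (hl : 0 < l)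
    (hlk : l ∣ k) (hkl : Even (k / l)) (d e L : ℕ)
    (hd : d = Nat.gcd n k) (he : e = Nat.gcd n l) (hL : L = Nat.lcm d l)
    (hde : Even (d / e)) (hpk : ¬ p ∣ k / L)
    (a : AlgebraicClosure (ZMod p)) (ha : a ∈ Ffield p n) :
    ((∃ x ∈ Ffield p n, Smap p l k x = a) ↔ Tmap p e (2 * e) (Tmap p d n a) = 0) ∧
    (Tmap p e (2 * e) (Tmap p d n a) = 0 →
      ∀ δ ∈ Ffield p n, Tmap p d n δ = 1 →
      ∀ δ₁ ∈ Ffield p d, Tmap p (2 * e) d δ₁ = 1 →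
      ∀ y₀, y₀ = ∑ i ∈ Finset.range (n / d - 1), ∑ j ∈ Finset.Ico (i + 1) (n / d),
          δ ^ p ^ (k * j) * (Tmap p l (2 * l) a) ^ p ^ (k * i) →
      ∀ x₀, x₀ = y₀ + (((2 * (k / L) : ℕ) : AlgebraicClosure (ZMod p)))⁻¹ *
          (a - Smap p l k y₀) * δ₁ →
        x₀ ∈ Ffield p n ∧ Smap p l k x₀ = a) := by
  obtain rfl : e = Nat.gcd d l := by rw [he, hd, Nat.gcd_assoc, Nat.gcd_eq_right hlk]
  subst hL hd
  have hd0 : 0 < Nat.gcd n k := Nat.gcd_pos_of_pos_left k hn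
  have h2e : 2 * Nat.gcd (Nat.gcd n k) l ∣ Nat.gcd n k :=
    mul_comm 2 _ ▸ Nat.mul_dvd_of_dvd_div (Nat.gcd_dvd_left _ l) (even_iff_two_dvd.1 hde)
  have hcond := Tmap_two_mul_gcd_eq_zero_iff hl h2e (Tmap_mem_Ffield_s16 (Nat.gcd_dvd_left n k) ha)
  have hs : ((2 * (k / Nat.lcm (Nat.gcd n k) l) : ℕ) : AlgebraicClosure (ZMod p)) ≠ 0 := by
    rw [Ne, CharP.cast_eq_zero_iff _ p, (Fact.out : p.Prime).dvd_mul, not_or]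
    exact ⟨fun h => hp2 ((Nat.prime_dvd_prime_iff_eq Fact.out Nat.prime_two).1 h), hpk⟩
  have hb : a + a ^ p ^ l ∈ Ffield p n := (Ffield.subfield p n).add_mem ha (pow_mem ha _)
  -- The construction (the second conjunct, first goal below) also yields the backward implication.
  refine (and_iff_right_of_imp fun construct =>
    ⟨fun ⟨x, hx, hxa⟩ => hcond.2 ?_, fun h => ?_⟩).2 ?_
  · rintro h δ hδ hδ1 δ₁ hδ₁ hδ₁1 y₀ hy₀ x₀ rfl
    rw [Tmap_two_mul hl] at hy₀
    have hy₀F : y₀ ∈ Ffield p n := hy₀ ▸ sum_mem fun i _ => sum_mem fun j _ =>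
      (Ffield.subfield p n).mul_mem (pow_mem hδ _) (pow_mem hb _)
    have hy := hilbert90Witness_sub_pow_char_pow hn hδ hδ1 hb
      (by rw [Tmap_add, Tmap_pow_char_pow]; exact hcond.1 h)
    rw [hilbert90Witness_iterateFrobenius, ← hy₀] at hy
    refine ⟨?_, Smap_add_inv_mul_sub_eq hs ?_ (sum_pow_char_pow_mul_eq_of_Tmap_eq_one hd0 hl h2e
      (Nat.lcm_dvd (Nat.gcd_dvd_right n k) hlk) hδ₁ hδ₁1)⟩
    · show _ ∈ Ffield.subfield p n
      exact add_mem hy₀F (mul_mem (mul_mem (inv_mem (natCast_mem _ _))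
        (sub_mem ha (Smap_mem_Ffield hy₀F l k))) (Ffield.mono (Nat.gcd_dvd_left n k) hδ₁))
    · rw [Smap_add_pow_char_pow hlk hkl, hy]
  · rw [← Tmap_pow_char_pow, ← Tmap_add, ← hxa, Smap_add_pow_char_pow hlk hkl]
    exact Tmap_gcd_sub_pow_char_pow_eq_zero hn hx
  · obtain ⟨δ, hδ, hδ1⟩ := exists_Tmap_eq_one (p := p) hd0 (Nat.gcd_dvd_left n k) hn
    obtain ⟨δ₁, hδ₁, hδ₁1⟩ := exists_Tmap_eq_one (p := p) (Nat.pos_of_dvd_of_pos h2e hd0) h2e hd0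
    exact ⟨_, construct h δ hδ hδ1 δ₁ hδ₁ hδ₁1 _ rfl _ rfl⟩

theorem stmt16 (p : ℕ) [Fact p.Prime] (hp2 : p ≠ 2) (n k l : ℕ)
    (hn : 0 < n) (hk : 0 < k) (hl : 0 < l)
    (hlk : l ∣ k) (hkl : Even (k / l)) (d e L : ℕ)
    (hd : d = Nat.gcd n k) (he : e = Nat.gcd n l) (hL : L = Nat.lcm d l)
    (hde : Even (d / e)) (hpk : ¬ p ∣ k / L)
    (a : AlgebraicClosure (ZMod p)) (ha : a ∈ Ffield p n) :
    ((∃ x ∈ Ffield p n, Smap p l k x = a) ↔ Tmap p e (2 * e) (Tmap p d n a) = 0) ∧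
    (Tmap p e (2 * e) (Tmap p d n a) = 0 →
      ∀ δ ∈ Ffield p n, Tmap p d n δ = 1 →
      ∀ δ₁ ∈ Ffield p d, Tmap p (2 * e) d δ₁ = 1 →
      ∀ y₀, y₀ = ∑ i ∈ Finset.range (n / d - 1), ∑ j ∈ Finset.Ico (i + 1) (n / d),
          δ ^ p ^ (k * j) * (Tmap p l (2 * l) a) ^ p ^ (k * i) →
      ∀ x₀, x₀ = y₀ + (((2 * (k / L) : ℕ) : AlgebraicClosure (ZMod p)))⁻¹ *
          (a - Smap p l k y₀) * δ₁ →
        x₀ ∈ Ffield p n ∧ Smap p l k x₀ = a) :=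
  stmt16_general p hp2 n k l hn hl hlk hkl d e L hd he hL hde hpk a ha
end
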